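/- arXiv:2102.00817 — 3 statements merged into one kernel-verified Lean document; each statement's English description precedes it below -/
import Mathlib

section
/- For every natural number n and every nonzero real number α, the probabilists' Hermite polynomials satisfy the scaling identity H_n(α·x) = α^n · Σ_{m=0}^{⌊n/2⌋} (1 - α^{-2})^m · D_n^m · H_{n-2m}(x), where D_n^m = n!/((n-2m)!·2^m·m!). -/
/-!
Compare coefficients of `x^k`. The coefficient of `x^k` in `H_{2j+k}` is `(-1)^j D_{2j+k}^j`,
and `D_n^m D_{n-2m}^{j-m} = binom(j, m) D_n^j`.
Writing `α^n (1 - α⁻²)^m = α^{n-2m} (α² - 1)^m`, the identity for the coefficient of `x^k`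
in `H_{2j+k}(αx)` becomes the binomial expansion of `((α² - 1) - α²)^j = (-1)^j`.
-/

open Nat Polynomial

/-- `D n k = n!/((n-2k)! 2^k k!)`. -/
def D (n k : ℕ) : ℕ := n ! / ((n - 2 * k)! * 2 ^ k * k !)

theorem Nat.factorial_two_mul (m : ℕ) : (2 * m)! = 2 ^ m * m ! * (2 * m - 1)‼ := by
  cases m with
  | zero => rfl
  | succ m =>
    rw [show 2 * (m + 1) = (2 * m + 1) + 1 by ring, factorial_eq_mul_doubleFactorial,
      show 2 * m + 1 + 1 = 2 * (m + 1) by ring, doubleFactorial_two_mul,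
      show 2 * (m + 1) - 1 = 2 * m + 1 by omega]

theorem D_mul_factorial {n m : ℕ} (h : 2 * m ≤ n) :
    D n m * ((n - 2 * m)! * 2 ^ m * m !) = n ! := by
  refine Nat.div_mul_cancel ⟨n.choose (2 * m) * (2 * m - 1)‼, ?_⟩
  rw [← choose_mul_factorial_mul_factorial h, factorial_two_mul]
  ring

theorem D_mul_D {n m i : ℕ} (h : 2 * (m + i) ≤ n) :
    D n m * D (n - 2 * m) i = (m + i).choose m * D n (m + i) := by
  have hsub : n - 2 * m - 2 * i = n - 2 * (m + i) := by omega
  refine Nat.eq_of_mul_eq_mul_right (m := (n - 2 * (m + i))! * 2 ^ (m + i) * m ! * i !)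
    (by positivity) ?_
  calc D n m * D (n - 2 * m) i * ((n - 2 * (m + i))! * 2 ^ (m + i) * m ! * i !)
      = D n m * (D (n - 2 * m) i * ((n - 2 * m - 2 * i)! * 2 ^ i * i !)) * (2 ^ m * m !) := by
        rw [hsub]; ring
    _ = D n m * ((n - 2 * m)! * 2 ^ m * m !) := by rw [D_mul_factorial (by omega)]; ring
    _ = n ! := D_mul_factorial (by omega)
    _ = (m + i).choose m * m ! * (m + i - m)! * D n (m + i) *
          (2 ^ (m + i) * (n - 2 * (m + i))!) := by
        rw [choose_mul_factorial_mul_factorial (by omega), ← D_mul_factorial h]; ring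
    _ = _ := by rw [add_tsub_cancel_left]; ring

theorem Polynomial.coeff_hermite_two_mul_add (j k : ℕ) :
    (hermite (2 * j + k)).coeff k = (-1) ^ j * D (2 * j + k) j := by
  rw [coeff_hermite_explicit, mul_assoc]
  congr 1
  norm_cast
  have hD := D_mul_factorial (n := 2 * j + k) (m := j) (by omega)
  have hchoose := choose_mul_factorial_mul_factorial (le_add_left k (2 * j))
  rw [add_tsub_cancel_left] at hD
  rw [add_tsub_cancel_right, factorial_two_mul] at hchoose
  refine Nat.eq_of_mul_eq_mul_right (m := k ! * 2 ^ j * j !) (by positivity) ?_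
  rw [hD, ← hchoose]
  ring

theorem Polynomial.coeff_hermite_eq_zero_of_forall_ne {n k : ℕ} (h : ∀ j, n ≠ 2 * j + k) :
    (hermite n).coeff k = 0 := by
  rcases lt_or_ge n k with hlt | hle
  · exact coeff_hermite_of_lt hlt
  · refine coeff_hermite_of_odd_add (Nat.not_even_iff_odd.mp fun ⟨r, hr⟩ => h (r - k) ?_)
    omega

theorem Polynomial.hermite_comp_C_mul_X {R : Type*} [CommRing R] (n : ℕ) (a : R) :
    ((hermite n).map (Int.castRingHom R)).comp (C a * X) =
      ∑ m ∈ Finset.range (n / 2 + 1),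
        C (a ^ (n - 2 * m) * (a ^ 2 - 1) ^ m * (D n m : R)) *
          (hermite (n - 2 * m)).map (Int.castRingHom R) := by
  ext k
  simp only [comp_C_mul_X_coeff, coeff_map, finsetSum_coeff, coeff_C_mul, eq_intCast]
  by_cases hk : ∃ j, n = 2 * j + k
  · obtain ⟨j, rfl⟩ := hk
    have hvanish : ∀ m ∈ Finset.range ((2 * j + k) / 2 + 1), m ∉ Finset.range (j + 1) →
        a ^ (2 * j + k - 2 * m) * (a ^ 2 - 1) ^ m * (D (2 * j + k) m : R) *
          ((hermite (2 * j + k - 2 * m)).coeff k : R) = 0 := by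
      intro m hm_range hm_large
      rw [coeff_hermite_of_lt (by simp at hm_range hm_large; omega), Int.cast_zero, mul_zero]
    rw [← Finset.sum_subset (Finset.range_subset_range.mpr (by omega)) hvanish]
    have hterm : ∀ m ∈ Finset.range (j + 1),
        a ^ (2 * j + k - 2 * m) * (a ^ 2 - 1) ^ m * (D (2 * j + k) m : R) *
          ((hermite (2 * j + k - 2 * m)).coeff k : R) =
        (a ^ 2 - 1) ^ m * (-a ^ 2) ^ (j - m) * (j.choose m : R) * (a ^ k * D (2 * j + k) j) := by
      intro m hm
      have hm : m ≤ j := Finset.mem_range_succ_iff.mp hm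
      have hsub : 2 * j + k - 2 * m = 2 * (j - m) + k := by omega
      have hD : ((D (2 * j + k) m * D (2 * (j - m) + k) (j - m) : ℕ) : R) =
          (j.choose m * D (2 * j + k) j : ℕ) := by
        rw [← hsub, D_mul_D (by omega), add_tsub_cancel_of_le hm]
      push_cast at hD
      rw [hsub, coeff_hermite_two_mul_add]
      push_cast
      linear_combination (a ^ (2 * (j - m) + k) * (a ^ 2 - 1) ^ m * (-1) ^ (j - m)) * hD
    rw [Finset.sum_congr rfl hterm, ← Finset.sum_mul, ← add_pow, coeff_hermite_two_mul_add]
    push_cast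
    ring
  · push Not at hk
    rw [coeff_hermite_eq_zero_of_forall_ne hk, Int.cast_zero, zero_mul]
    refine (Finset.sum_eq_zero fun m hm => ?_).symm
    rw [coeff_hermite_eq_zero_of_forall_ne fun i hi => hk (i + m) (by simp at hm; omega),
      Int.cast_zero, mul_zero]

theorem hermite_scaling (n : ℕ) (α : ℝ) (hα : α ≠ 0) :
    ((hermite n).map (Int.castRingHom ℝ)).comp (C α * X) =
      C (α ^ n) * ∑ m ∈ Finset.range (n / 2 + 1),
        C ((1 - (α ^ 2)⁻¹) ^ m * (D n m : ℝ)) *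
          (hermite (n - 2 * m)).map (Int.castRingHom ℝ) := by
  rw [hermite_comp_C_mul_X, Finset.mul_sum]
  refine Finset.sum_congr rfl fun m hm => ?_
  have hsplit : α ^ n = α ^ (n - 2 * m) * (α ^ 2) ^ m := by
    rw [← pow_mul, ← pow_add, tsub_add_cancel_of_le (by simp at hm; omega)]
  have hsq : α ^ 2 * (1 - (α ^ 2)⁻¹) = α ^ 2 - 1 := by field_simp
  rw [← mul_assoc, ← C_mul, hsplit, ← hsq, mul_pow]
  congr 2
  ring
end

section
/- For every natural number n ≥ 0 and every natural number m with 1 ≤ m ≤ ⌊n/2⌋, the inversion identity Σ_{k=0}^{m} (-1)^k · D_n^k · D_{n-2k}^{m-k} = 0 holds, where D_n^k = n!/((n-2k)!·2^k·k!). (Equivalently, the explicit Hermite-to-monomial and monomial-to-Hermite expansions are mutually inverse.) -/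
/-!
Since `D_n^k · D_{n-2k}^{m-k} = n! / ((n-2m)! 2^m k! (m-k)!) = D_n^m · C(m, k)`, the sum is
`D_n^m · Σ_k (-1)^k C(m, k)`, and the alternating sum of a row of Pascal's triangle vanishes for
`m ≥ 1`.
-/

open Nat

lemma two_pow_mul_factorial_dvd_factorial_two_mul (k : ℕ) : 2 ^ k * k ! ∣ (2 * k)! := by
  rw [← doubleFactorial_two_mul]
  cases k with
  | zero => rfl
  | succ k =>
    rw [show 2 * (k + 1) = (2 * k + 1) + 1 by ring, factorial_eq_mul_doubleFactorial]
    exact dvd_mul_right _ _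

lemma factorial_mul_two_pow_mul_factorial_dvd {n k : ℕ} (h : 2 * k ≤ n) :
    (n - 2 * k)! * 2 ^ k * k ! ∣ n ! := by
  rw [mul_assoc]
  exact (mul_dvd_mul_left _ (two_pow_mul_factorial_dvd_factorial_two_mul k)).trans
    (by simpa only [mul_comm] using factorial_mul_factorial_dvd_factorial h)

lemma cast_D {n k : ℕ} (h : 2 * k ≤ n) :
    (D n k : ℚ) = n ! / ((n - 2 * k)! * 2 ^ k * k !) := by
  rw [D, cast_div (factorial_mul_two_pow_mul_factorial_dvd h) (by positivity)]
  push_cast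
  rfl

lemma D_mul_D_sub {n m k : ℕ} (hk : k ≤ m) (h : 2 * m ≤ n) :
    D n k * D (n - 2 * k) (m - k) = D n m * m.choose k := by
  have hsub : n - 2 * k - 2 * (m - k) = n - 2 * m := by omega
  have hchoose : (m.choose k : ℚ) * k ! * (m - k)! = m ! := by
    exact_mod_cast choose_mul_factorial_mul_factorial hk
  have hchoose_ne : (m.choose k : ℚ) ≠ 0 := by exact_mod_cast (choose_pos hk).ne'
  have hpow : (2 : ℚ) ^ k * 2 ^ (m - k) = 2 ^ m := by
    rw [← pow_add, Nat.add_sub_cancel' hk]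
  have : ((D n k * D (n - 2 * k) (m - k) : ℕ) : ℚ) = (D n m * m.choose k : ℕ) := by
    push_cast
    rw [cast_D (by omega), cast_D (by omega), cast_D h, hsub, ← hpow, ← hchoose]
    field_simp
  exact_mod_cast this

theorem hermite_inversion_identity (n m : ℕ) (hm : 1 ≤ m) (hmn : m ≤ n / 2) :
    ∑ k ∈ Finset.range (m + 1),
      (-1 : ℤ) ^ k * (D n k : ℤ) * (D (n - 2 * k) (m - k) : ℤ) = 0 := by
  have h2m : 2 * m ≤ n := by omega
  calc ∑ k ∈ Finset.range (m + 1), (-1 : ℤ) ^ k * (D n k : ℤ) * (D (n - 2 * k) (m - k) : ℤ)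
      = ∑ k ∈ Finset.range (m + 1), (D n m : ℤ) * ((-1) ^ k * m.choose k) := by
        refine Finset.sum_congr rfl fun k hk => ?_
        have hprod := D_mul_D_sub (Finset.mem_range_succ_iff.mp hk) h2m
        rw [mul_assoc, ← Nat.cast_mul, hprod]
        push_cast
        ring
    _ = 0 := by
        rw [← Finset.mul_sum, Int.alternating_sum_range_choose_of_ne (by omega), mul_zero]
end

section
/- For every natural number n, real u, and real θ > 0, the Gaussian Hermite moment identity holds: ∫_{-∞}^{∞} (2π)^{-1/2} e^{-v²/2} H_n(√θ·v + u) dv = Σ_{k=0}^{⌊n/2⌋} D_n^k (θ-1)^k u^{n-2k}, where D_n^k = n!/((n-2k)!·2^k·k!). -/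
open Nat Polynomial

/-!
Write `E` for the standard Gaussian expectation of a polynomial. Gaussian integration by parts
gives `E (X * P) = E P'`; combined with `He_{n+2} = X He_{n+1} - (n+1) He_n` and
`He_{n+1}' = (n+1) He_n`, it shows that `m_n = E He_n(√θ Z + u)` satisfies
`m_{n+2} = u m_{n+1} + (n+1)(θ-1) m_n` with `m_0 = 1`, `m_1 = u`. The right-hand side obeys the same
recursion because `D_n^k` counts the `k`-edge matchings of `n` points, so that
`D_{n+2}^{k+1} = D_{n+1}^{k+1} + (n+1) D_n^k`: the last point is either unmatched or matched to one
of the `n + 1` others.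
-/

open MeasureTheory Real Finset

noncomputable section

-- Unlike `D`, this vanishes for `n < 2 * k`, so the recursion `matchingCount_add_two` holds for
-- all `n, k`.
def matchingCount (n k : ℕ) : ℕ := n.choose (2 * k) * (2 * k - 1)‼

theorem Nat.factorial_two_mul_eq (k : ℕ) : (2 * k)! = 2 ^ k * k ! * (2 * k - 1)‼ := by
  cases k with
  | zero => rfl
  | succ j =>
    rw [← doubleFactorial_two_mul, show 2 * (j + 1) = 2 * j + 1 + 1 by ring,
      factorial_eq_mul_doubleFactorial]
    rfl

theorem D_eq_matchingCount {n k : ℕ} (h : 2 * k ≤ n) : D n k = matchingCount n k := by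
  refine Nat.div_eq_of_eq_mul_left (by positivity) ?_
  rw [← choose_mul_factorial_mul_factorial h, factorial_two_mul_eq, matchingCount]
  ring

theorem matchingCount_zero_right (n : ℕ) : matchingCount n 0 = 1 := by
  simp [matchingCount]

theorem matchingCount_eq_zero_of_lt {n k : ℕ} (h : n < 2 * k) : matchingCount n k = 0 := by
  simp [matchingCount, choose_eq_zero_of_lt h]

theorem matchingCount_add_two (n k : ℕ) :
    matchingCount (n + 2) (k + 1) =
      matchingCount (n + 1) (k + 1) + (n + 1) * matchingCount n k := by
  have hchoose : (n + 1).choose (2 * k + 1) * (2 * k + 1) = (n + 1) * n.choose (2 * k) :=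
    (add_one_mul_choose_eq n (2 * k)).symm
  simp only [matchingCount, show 2 * (k + 1) = 2 * k + 1 + 1 by ring, Nat.add_sub_cancel,
    choose_succ_succ' (n + 1), doubleFactorial_add_one (2 * k)]
  rw [← mul_assoc (n + 1), ← hchoose]
  ring

-- For `0 ≤ a` this is the `n`-th moment of the normal law with mean `u` and variance `a`.
def normalMoment (a u : ℝ) (n : ℕ) : ℝ :=
  ∑ k ∈ range (n / 2 + 1), (matchingCount n k : ℝ) * a ^ k * u ^ (n - 2 * k)

section normalMoment

variable (a u : ℝ)

theorem sum_range_eq_normalMoment {n N : ℕ} (hN : n / 2 + 1 ≤ N) :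
    ∑ k ∈ range N, (matchingCount n k : ℝ) * a ^ k * u ^ (n - 2 * k) = normalMoment a u n := by
  refine (sum_subset (range_subset_range.2 hN) fun k _ hk => ?_).symm
  rw [matchingCount_eq_zero_of_lt (by simp at hk; omega)]
  simp

theorem normalMoment_zero : normalMoment a u 0 = 1 := by
  simp [normalMoment, matchingCount_zero_right]

theorem normalMoment_one : normalMoment a u 1 = u := by
  simp [normalMoment, matchingCount_zero_right]

theorem normalMoment_term_add_two (n k : ℕ) :
    (matchingCount (n + 2) (k + 1) : ℝ) * a ^ (k + 1) * u ^ (n + 2 - 2 * (k + 1)) =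
      u * ((matchingCount (n + 1) (k + 1) : ℝ) * a ^ (k + 1) * u ^ (n + 1 - 2 * (k + 1))) +
        (n + 1) * a * ((matchingCount n k : ℝ) * a ^ k * u ^ (n - 2 * k)) := by
  rw [matchingCount_add_two, show n + 2 - 2 * (k + 1) = n - 2 * k by omega]
  push_cast
  rcases le_or_gt (2 * k + 1) n with h | h
  · rw [show n - 2 * k = n + 1 - 2 * (k + 1) + 1 by omega]
    ring
  · rw [matchingCount_eq_zero_of_lt (by omega : n + 1 < 2 * (k + 1))]
    ring

theorem normalMoment_add_two (n : ℕ) :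
    normalMoment a u (n + 2) = u * normalMoment a u (n + 1) + (n + 1) * a * normalMoment a u n := by
  rw [← sum_range_eq_normalMoment a u (show (n + 1) / 2 + 1 ≤ n / 2 + 2 by omega), normalMoment,
    show (n + 2) / 2 + 1 = n / 2 + 1 + 1 by omega, sum_range_succ', sum_range_succ' _ (n / 2 + 1)]
  simp only [normalMoment_term_add_two, sum_add_distrib, ← mul_sum, matchingCount_zero_right,
    mul_zero, Nat.sub_zero]
  rw [normalMoment]
  ring

end normalMoment

theorem derivative_hermite_succ (n : ℕ) :
    derivative (hermite (n + 1)) = (n + 1) • hermite n := by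
  induction n with
  | zero => simp
  | succ n ih =>
    rw [hermite_succ (n + 1), derivative_sub, derivative_mul, derivative_X, ih, derivative_smul,
      mul_smul_comm, add_sub_assoc, ← smul_sub, ← hermite_succ, one_mul, succ_nsmul' _ (n + 1)]

theorem hermite_add_two (n : ℕ) :
    hermite (n + 2) = X * hermite (n + 1) - (n + 1) • hermite n := by
  rw [hermite_succ (n + 1), derivative_hermite_succ]

section map

variable {R : Type*} [Ring R] (f : ℤ →+* R) (n : ℕ)

theorem derivative_map_hermite_succ :
    derivative ((hermite (n + 1)).map f) = (n + 1) • (hermite n).map f := by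
  rw [derivative_map, derivative_hermite_succ, ← coe_mapRingHom, map_nsmul]

theorem map_hermite_add_two :
    (hermite (n + 2)).map f = X * (hermite (n + 1)).map f - (n + 1) • (hermite n).map f := by
  rw [hermite_add_two, ← coe_mapRingHom]
  simp only [map_sub, map_mul, map_nsmul, coe_mapRingHom, Polynomial.map_X]

end map

theorem hasDerivAt_exp_neg_sq_div_two (x : ℝ) :
    HasDerivAt (fun v => exp (-v ^ 2 / 2)) (-x * exp (-x ^ 2 / 2)) x := by
  have h : HasDerivAt (fun v : ℝ => -v ^ 2 / 2) (-x) x :=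
    ((hasDerivAt_pow 2 x).neg.div_const 2).congr_deriv (by push_cast; ring)
  simpa [mul_comm] using h.exp

theorem integrable_pow_mul_exp_neg_sq_div_two (m : ℕ) :
    Integrable fun v : ℝ => v ^ m * exp (-v ^ 2 / 2) := by
  have h := integrable_rpow_mul_exp_neg_mul_sq (b := 1 / 2) (by norm_num)
    (s := m) (by linarith [m.cast_nonneg (α := ℝ)])
  convert h using 2 with v
  rw [rpow_natCast]
  ring_nf

theorem Polynomial.integrable_eval_mul_exp_neg_sq_div_two (P : ℝ[X]) :
    Integrable fun v => P.eval v * exp (-v ^ 2 / 2) := by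
  simp only [eval_eq_sum_range, sum_mul, mul_assoc]
  exact integrable_finsetSum _ fun m _ => (integrable_pow_mul_exp_neg_sq_div_two m).const_mul _

theorem Polynomial.integral_eval_X_mul_mul_exp_neg_sq_div_two (P : ℝ[X]) :
    ∫ v, (X * P).eval v * exp (-v ^ 2 / 2) = ∫ v, (derivative P).eval v * exp (-v ^ 2 / 2) := by
  have h := integral_mul_deriv_eq_deriv_mul_of_integrable (fun x _ => P.hasDerivAt x)
    (fun x _ => hasDerivAt_exp_neg_sq_div_two x)
    (by convert (-X * P).integrable_eval_mul_exp_neg_sq_div_two using 1; ext v; simp; ring)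
    (derivative P).integrable_eval_mul_exp_neg_sq_div_two P.integrable_eval_mul_exp_neg_sq_div_two
  rw [← neg_eq_iff_eq_neg, ← integral_neg] at h
  rw [← h]
  congr 1 with v
  simp only [eval_mul, eval_X]
  ring

def gaussianExpect : ℝ[X] →ₗ[ℝ] ℝ where
  toFun P := (√(2 * π))⁻¹ * ∫ v, P.eval v * exp (-v ^ 2 / 2)
  map_add' P Q := by
    simp only [eval_add, add_mul]
    rw [integral_add P.integrable_eval_mul_exp_neg_sq_div_two
      Q.integrable_eval_mul_exp_neg_sq_div_two, mul_add]
  map_smul' c P := by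
    simp only [eval_smul, smul_eq_mul, mul_assoc, integral_const_mul, RingHom.id_apply]
    ring

theorem gaussianExpect_apply (P : ℝ[X]) :
    gaussianExpect P = (√(2 * π))⁻¹ * ∫ v, P.eval v * exp (-v ^ 2 / 2) :=
  rfl

theorem gaussianExpect_one : gaussianExpect 1 = 1 := by
  have h : ∫ v : ℝ, exp (-v ^ 2 / 2) = √(2 * π) := by
    simpa [div_eq_inv_mul, mul_comm] using integral_gaussian (1 / 2)
  rw [gaussianExpect_apply]
  simp only [eval_one, one_mul, h]
  exact inv_mul_cancel₀ (by positivity)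

theorem gaussianExpect_X_mul (P : ℝ[X]) :
    gaussianExpect (X * P) = gaussianExpect (derivative P) := by
  rw [gaussianExpect_apply, gaussianExpect_apply, P.integral_eval_X_mul_mul_exp_neg_sq_div_two]

theorem gaussianExpect_C_mul (c : ℝ) (P : ℝ[X]) :
    gaussianExpect (C c * P) = c * gaussianExpect P := by
  rw [C_mul', map_smul, smul_eq_mul]

theorem gaussianExpect_X_mul_comp (s u : ℝ) (P : ℝ[X]) :
    gaussianExpect ((X * P).comp (C s * X + C u)) =
      u * gaussianExpect (P.comp (C s * X + C u)) +
        s ^ 2 * gaussianExpect ((derivative P).comp (C s * X + C u)) := by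
  have hderiv :
      derivative (P.comp (C s * X + C u)) = C s * (derivative P).comp (C s * X + C u) := by
    simp [derivative_comp]
  rw [mul_comp, X_comp, add_mul, mul_assoc, map_add, gaussianExpect_C_mul, gaussianExpect_C_mul,
    gaussianExpect_X_mul, hderiv, gaussianExpect_C_mul]
  ring

theorem gaussianExpect_hermite_comp (s u : ℝ) (n : ℕ) :
    gaussianExpect (((hermite n).map (Int.castRingHom ℝ)).comp (C s * X + C u)) =
      normalMoment (s ^ 2 - 1) u n := by
  induction n using Nat.twoStepInduction with
  | zero => simp [gaussianExpect_one, normalMoment_zero]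
  | one =>
    simpa [normalMoment_one, gaussianExpect_one] using gaussianExpect_X_mul_comp s u 1
  | more n ih₀ ih₁ =>
    rw [map_hermite_add_two, sub_comp, map_sub, gaussianExpect_X_mul_comp,
      derivative_map_hermite_succ, smul_comp, map_nsmul, ih₀, ih₁, normalMoment_add_two,
      nsmul_eq_mul]
    push_cast
    ring

end

theorem hermite_gaussian_moment (n : ℕ) (u θ : ℝ) (hθ : 0 < θ) :
    ∫ v : ℝ, (Real.sqrt (2 * Real.pi))⁻¹ * Real.exp (-v ^ 2 / 2) *
        ((hermite n).map (Int.castRingHom ℝ)).eval (Real.sqrt θ * v + u) =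
      ∑ k ∈ Finset.range (n / 2 + 1), (D n k : ℝ) * (θ - 1) ^ k * u ^ (n - 2 * k) := by
  have hexpect : ∫ v : ℝ, (√(2 * π))⁻¹ * exp (-v ^ 2 / 2) *
      ((hermite n).map (Int.castRingHom ℝ)).eval (√θ * v + u) =
        gaussianExpect (((hermite n).map (Int.castRingHom ℝ)).comp (C √θ * X + C u)) := by
    rw [gaussianExpect_apply, ← integral_const_mul]
    congr 1 with v
    simp only [eval_comp, eval_add, eval_mul, eval_C, eval_X]
    ring
  rw [hexpect, gaussianExpect_hermite_comp, sq_sqrt hθ.le, normalMoment]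
  refine sum_congr rfl fun k hk => ?_
  rw [D_eq_matchingCount (by simp at hk; omega)]
end
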